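/- Let Φ, Φ' : S¹ → U(n) be measurable unitary-valued functions with Φℋ₊ = Φ'ℋ₊ as subspaces of L²(S¹,ℂⁿ). Then there is a constant unitary matrix U ∈ U(n) with Φ'(λ) = Φ(λ)U for a.e. λ ∈ S¹. -/

import Mathlib

open MeasureTheory Complex
open scoped Matrix

noncomputable section

local instance : Fact (0 < 2 * Real.pi) := ⟨by positivity⟩

/-- The circle `S¹` parametrized as `ℝ/2πℤ`; the point `θ` corresponds to `λ = e^{iθ} ∈ S¹`. -/
abbrev Tc : Type := AddCircle (2 * Real.pi)

/-- `ℂⁿ` as a Hilbert space. -/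
abbrev Ecn (n : ℕ) : Type := EuclideanSpace ℂ (Fin n)

/-- The Hilbert space `L²(S¹, ℂⁿ)`. -/
abbrev H2 (n : ℕ) : Type := Lp (Ecn n) 2 (volume : Measure Tc)

/-- The Hardy space `ℋ₊ ⊂ L²(S¹,ℂⁿ)`: elements whose negative Fourier coefficients vanish. -/
def Hardy (n : ℕ) : Set (H2 n) :=
  {f | ∀ m : ℤ, m < 0 → fourierCoeff (f : Tc → Ecn n) m = 0}

/-- The subset `Φℋ₊` of `L²(S¹,ℂⁿ)`: the image of the Hardy space under pointwise
multiplication by the matrix-valued function `Φ`. -/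
def mulHardy {n : ℕ} (Φ : Tc → Matrix (Fin n) (Fin n) ℂ) : Set (H2 n) :=
  {g | ∃ f ∈ Hardy n, (g : Tc → Ecn n) =ᵐ[volume] fun θ =>
    (WithLp.equiv 2 (∀ _ : Fin n, ℂ)).symm
      ((Φ θ).mulVec (WithLp.equiv 2 (∀ _ : Fin n, ℂ) ((f : Tc → Ecn n) θ)))}

/-! Put `Ψ = Φᴴ Φ'`. The constant function `e_j` lies in `ℋ₊`, so `Φ' e_j ∈ Φ'ℋ₊ ⊆ Φℋ₊`; as `Φ` is
unitary, the `j`-th column of `Ψ` is then in `ℋ₊`, i.e. the entries of `Ψ` have no negative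
Fourier coefficients. The same argument with `Φ` and `Φ'` swapped applies to `Ψᴴ = Φ'ᴴ Φ`, so the
positive coefficients vanish as well. Hence `Ψ` is a.e. a constant matrix `U`, unitary because `Ψ`
is, and `Φ' = Φ Ψ = Φ U`. -/

open scoped ComplexConjugate

namespace AddCircle

variable {T : ℝ} [hT : Fact (0 < T)]

lemma ae_haarAddCircle : ae (haarAddCircle : Measure (AddCircle T)) = ae volume := by
  rw [volume_eq_smul_haarAddCircle,
    Measure.ae_ennreal_smul_measure_eq (by simpa using hT.out)]

lemma integrable_haarAddCircle_iff {E : Type*} [NormedAddCommGroup E] {f : AddCircle T → E} :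
    Integrable f haarAddCircle ↔ Integrable f := by
  rw [volume_eq_smul_haarAddCircle,
    integrable_smul_measure (by simpa using hT.out) ENNReal.ofReal_ne_top]

end AddCircle

open AddCircle

section fourierCoeff

variable {T : ℝ} [Fact (0 < T)]

theorem fourierCoeff_const {E : Type*} [NormedAddCommGroup E] [NormedSpace ℂ E] [CompleteSpace E]
    (v : E) (m : ℤ) :
    fourierCoeff (fun _ : AddCircle T => v) m = (Pi.single 0 v : ℤ → E) m := by
  have h := congrFun (fourierCoeff_fourier (T := T) 0) m
  simp only [fourierCoeff, fourier_zero, smul_eq_mul, mul_one] at h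
  rw [fourierCoeff, integral_smul_const, h]
  rcases eq_or_ne m 0 with rfl | hm <;> simp [*]

theorem fourierCoeff_congr_ae_volume {E : Type*} [NormedAddCommGroup E] [NormedSpace ℂ E]
    {f g : AddCircle T → E} (h : f =ᵐ[volume] g) : fourierCoeff f = fourierCoeff g :=
  fourierCoeff_congr_ae (by rwa [Filter.EventuallyEq, ae_haarAddCircle])

theorem fourierCoeff_conj (f : AddCircle T → ℂ) (m : ℤ) :
    fourierCoeff (fun t => conj (f t)) m = conj (fourierCoeff f (-m)) := by
  rw [fourierCoeff, fourierCoeff, ← integral_conj]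
  congr 1 with t
  rw [smul_eq_mul, smul_eq_mul, map_mul, ← fourier_neg, neg_neg]

theorem fourierCoeff_conjTranspose_apply {ι : Type*} {A : AddCircle T → Matrix ι ι ℂ}
    (i j : ι) (m : ℤ) :
    fourierCoeff (fun θ => (A θ)ᴴ j i) (-m) = conj (fourierCoeff (fun θ => A θ i j) m) := by
  simpa using fourierCoeff_conj (fun θ => A θ i j) (-m)

theorem fourierCoeff_piLp_apply {q : ENNReal} [Fact (1 ≤ q)] {ι : Type*} [Fintype ι]
    {E : ι → Type*} [∀ i, NormedAddCommGroup (E i)] [∀ i, NormedSpace ℂ (E i)]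
    [∀ i, CompleteSpace (E i)] {f : AddCircle T → PiLp q E}
    (hf : Integrable f haarAddCircle) (m : ℤ) (i : ι) :
    fourierCoeff f m i = fourierCoeff (fun t => f t i) m := by
  rw [fourierCoeff, eval_integral_piLp (hf.fourier_smul _).eval_piLp]
  rfl

theorem ae_eq_const_of_fourierCoeff_eq_zero {f : AddCircle T → ℂ} (hf : MemLp f 2 haarAddCircle)
    (h : ∀ m ≠ 0, fourierCoeff f m = 0) :
    f =ᵐ[haarAddCircle] fun _ => fourierCoeff f 0 := by
  have hLp : hf.toLp f = fourierCoeff f 0 • fourierLp 2 0 := by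
    refine fourierBasis.repr.injective (lp.ext_iff.mpr (funext fun m => ?_))
    rw [fourierBasis_repr, fourierCoeff_congr_ae hf.coeFn_toLp, map_smul, ← coe_fourierBasis,
      fourierBasis.repr_self]
    rcases eq_or_ne m 0 with rfl | hm
    · simp
    · simp [lp.single_apply, hm, h m hm]
  filter_upwards [hf.coeFn_toLp, hLp ▸ Lp.coeFn_smul _ _, coeFn_fourierLp 2 0]
    with t h1 h2 h3
  rw [← h1, h2, Pi.smul_apply, h3, fourier_zero, smul_eq_mul, mul_one]

end fourierCoeff

section unitary

variable {ι 𝕜 : Type*} [Fintype ι] [DecidableEq ι] [RCLike 𝕜]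

theorem Matrix.eq_conjTranspose_mul_mulVec_of_mulVec_eq {U A : Matrix ι ι 𝕜} {u w : ι → 𝕜}
    (hU : U ∈ Matrix.unitaryGroup ι 𝕜) (h : U *ᵥ u = A *ᵥ w) : u = (Uᴴ * A) *ᵥ w := by
  rw [← mulVec_mulVec, ← h, mulVec_mulVec, ← star_eq_conjTranspose,
    Unitary.star_mul_self_of_mem hU, one_mulVec]

theorem memLp_entry_of_ae_mem_unitaryGroup {α : Type*} [MeasurableSpace α]
    {μ : Measure α} [IsFiniteMeasure μ] {Φ : α → Matrix ι ι 𝕜} {i j : ι}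
    (hmeas : AEStronglyMeasurable (fun x => Φ x i j) μ)
    (hunit : ∀ᵐ x ∂μ, Φ x ∈ Matrix.unitaryGroup ι 𝕜) (p : ENNReal) :
    MemLp (fun x => Φ x i j) p μ :=
  MemLp.of_bound hmeas 1 (hunit.mono fun _ hx => entry_norm_bound_of_unitary hx i j)

theorem exists_unitary_ae_eq_of_fourierCoeff_eq_zero {T : ℝ} [Fact (0 < T)]
    {Ψ : AddCircle T → Matrix ι ι ℂ} (hmeas : ∀ i j, Measurable fun θ => Ψ θ i j)
    (hunit : ∀ᵐ θ, Ψ θ ∈ Matrix.unitaryGroup ι ℂ)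
    (hcoeff : ∀ i j, ∀ m ≠ 0, fourierCoeff (fun θ => Ψ θ i j) m = 0) :
    ∃ U ∈ Matrix.unitaryGroup ι ℂ, ∀ᵐ θ, Ψ θ = U := by
  rw [← ae_haarAddCircle] at hunit ⊢
  set U : Matrix ι ι ℂ := Matrix.of fun i j => fourierCoeff (fun θ => Ψ θ i j) 0
  have hΨU : ∀ᵐ θ ∂haarAddCircle, Ψ θ = U := by
    have hentry i j := ae_eq_const_of_fourierCoeff_eq_zero
      (memLp_entry_of_ae_mem_unitaryGroup (hmeas i j).aestronglyMeasurable hunit 2) (hcoeff i j)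
    filter_upwards [ae_all_iff.mpr fun i => ae_all_iff.mpr (hentry i)] with θ hθ
    exact Matrix.ext hθ
  obtain ⟨θ, hθU, hθ⟩ := (hΨU.and hunit).exists
  exact ⟨U, hθU ▸ hθ, hΨU⟩

end unitary

theorem MeasureTheory.Lp.const_mem_Hardy {n : ℕ} (v : Ecn n) : Lp.const 2 volume v ∈ Hardy n := by
  intro m hm
  rw [fourierCoeff_congr_ae_volume (Lp.coeFn_const 2 volume v)]
  exact (fourierCoeff_const v m).trans (by simp [hm.ne])

theorem MeasureTheory.MemLp.toLp_mem_mulHardy {n : ℕ} {Φ : Tc → Matrix (Fin n) (Fin n) ℂ}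
    {v : Fin n → ℂ} (hmem : MemLp (fun θ : Tc => (WithLp.toLp 2 (Φ θ *ᵥ v) : Ecn n)) 2 volume) :
    hmem.toLp _ ∈ mulHardy Φ := by
  refine ⟨Lp.const 2 volume (WithLp.toLp 2 v), Lp.const_mem_Hardy _, ?_⟩
  filter_upwards [hmem.coeFn_toLp, Lp.coeFn_const 2 volume (WithLp.toLp 2 v)] with θ h1 h2
  simp [h1]

theorem fourierCoeff_conjTranspose_mul_apply_eq_zero_of_subset {n : ℕ}
    {Φ Φ' : Tc → Matrix (Fin n) (Fin n) ℂ} (hmeas' : ∀ i j, Measurable fun θ => Φ' θ i j)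
    (hunit : ∀ᵐ θ, Φ θ ∈ Matrix.unitaryGroup (Fin n) ℂ)
    (hunit' : ∀ᵐ θ, Φ' θ ∈ Matrix.unitaryGroup (Fin n) ℂ)
    (hsub : mulHardy Φ' ⊆ mulHardy Φ) (i j : Fin n) {m : ℤ} (hm : m < 0) :
    fourierCoeff (fun θ => ((Φ θ)ᴴ * Φ' θ) i j) m = 0 := by
  have hcol : MemLp (fun θ : Tc => (WithLp.toLp 2 (Φ' θ *ᵥ Pi.single j 1) : Ecn n)) 2 :=
    MemLp.of_eval_piLp fun k => by
      simpa using memLp_entry_of_ae_mem_unitaryGroup (hmeas' k j).aestronglyMeasurable hunit' 2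
  obtain ⟨f, hf, hfΦ⟩ := hsub hcol.toLp_mem_mulHardy
  have hfΨ : (fun θ => ((Φ θ)ᴴ * Φ' θ) i j) =ᵐ[volume] fun θ => f θ i := by
    filter_upwards [hcol.coeFn_toLp, hfΦ, hunit] with θ h1 h2 hθ
    have hΦf : Φ θ *ᵥ WithLp.ofLp (f θ) = Φ' θ *ᵥ Pi.single j 1 := by
      simpa using congrArg WithLp.ofLp (h2.symm.trans h1)
    have := Matrix.eq_conjTranspose_mul_mulVec_of_mulVec_eq hθ hΦf
    simpa using (congrFun this i).symm
  have hfint : Integrable (f : Tc → Ecn n) haarAddCircle :=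
    integrable_haarAddCircle_iff.mpr ((Lp.memLp f).integrable one_le_two)
  rw [fourierCoeff_congr_ae_volume hfΨ, ← fourierCoeff_piLp_apply hfint m i, hf m hm]
  rfl

theorem beurling_lax_halmos_uniqueness
    (n : ℕ)
    (Φ Φ' : Tc → Matrix (Fin n) (Fin n) ℂ)
    (hmeas : ∀ i j : Fin n, Measurable fun θ => Φ θ i j)
    (hmeas' : ∀ i j : Fin n, Measurable fun θ => Φ' θ i j)
    (hunit : ∀ᵐ θ ∂(volume : Measure Tc), Φ θ ∈ Matrix.unitaryGroup (Fin n) ℂ)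
    (hunit' : ∀ᵐ θ ∂(volume : Measure Tc), Φ' θ ∈ Matrix.unitaryGroup (Fin n) ℂ)
    (heq : mulHardy Φ = mulHardy Φ') :
    ∃ U ∈ Matrix.unitaryGroup (Fin n) ℂ,
      ∀ᵐ θ ∂(volume : Measure Tc), Φ' θ = Φ θ * U := by
  have hΨmeas (i j : Fin n) : Measurable fun θ => ((Φ θ)ᴴ * Φ' θ) i j := by
    simp only [Matrix.mul_apply, Matrix.conjTranspose_apply]
    fun_prop
  have hΨunit : ∀ᵐ θ, (Φ θ)ᴴ * Φ' θ ∈ Matrix.unitaryGroup (Fin n) ℂ := by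
    filter_upwards [hunit, hunit'] with θ hθ hθ'
    exact mul_mem (Unitary.star_mem hθ) hθ'
  have hcoeff (i j : Fin n) (m : ℤ) (hm : m ≠ 0) :
      fourierCoeff (fun θ => ((Φ θ)ᴴ * Φ' θ) i j) m = 0 := by
    rcases hm.lt_or_gt with hm | hm
    · exact fourierCoeff_conjTranspose_mul_apply_eq_zero_of_subset hmeas' hunit hunit' heq.ge
        i j hm
    · have h := fourierCoeff_conjTranspose_mul_apply_eq_zero_of_subset hmeas hunit' hunit heq.le
        j i (neg_neg_of_pos hm)
      have hadj θ : (Φ' θ)ᴴ * Φ θ = ((Φ θ)ᴴ * Φ' θ)ᴴ := by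
        rw [Matrix.conjTranspose_mul, Matrix.conjTranspose_conjTranspose]
      simp_rw [hadj] at h
      rwa [fourierCoeff_conjTranspose_apply, map_eq_zero] at h
  obtain ⟨U, hU, hΨU⟩ := exists_unitary_ae_eq_of_fourierCoeff_eq_zero hΨmeas hΨunit hcoeff
  refine ⟨U, hU, ?_⟩
  filter_upwards [hunit, hΨU] with θ hθ hθU
  rw [← hθU, ← mul_assoc, ← Matrix.star_eq_conjTranspose, Unitary.mul_star_self_of_mem hθ, one_mul]

end
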